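/- arXiv:1406.3422 — 3 statements merged into one kernel-verified Lean document; each statement's English description precedes it below -/
import Mathlib

section
/- Suppose there are constants d > 0 and k > 0 and a nondecreasing function θ : [0,∞) → [0,∞) such that ‖S(L) u₀‖_X ≤ θ(L) e^{d / L^k} ( ∫_0^L ‖B S(t) u₀‖_U² dt )^{1/2} for all L > 0 and all u₀ ∈ X. Then there exists a constant N > 0, depending only on d and k, such that for all T > 0 and all u₀ ∈ X: ‖S(T) u₀‖_X ≤ F(T) e^{N / T^k} ∫_0^T ‖B S(t) u₀‖_U dt, where F(T) := θ(T)² ‖B‖ M e^{α T}. -/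
open MeasureTheory Set Filter Topology Real

/-!
Take times `τ n ↓ T / 2` with `τ 0 = T`. For `t ∈ [τ (n+1), τ n]` the growth bound gives
`‖B S(t) u‖ ≤ ‖B‖ M e^{αT} ‖S(τ (n+1)) u‖`, so `∫ ‖B S(t) u‖²` over that interval is at most
`‖B‖ M e^{αT} ‖S(τ (n+1)) u‖ ∫₀ᵀ ‖B S(t) u‖`. The `L²` estimate on the interval then reads
`g n ≤ e^{a n} √(K g (n+1))` with `g n = ‖S(τ n) u‖`, `a n = d / (τ n - τ (n+1))^k` and
`K = θ(T)² ‖B‖ M e^{αT} ∫₀ᵀ ‖B S(t) u‖`. Iterating gives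
`g 0 ≤ e^{Σ a j / 2^j} K^{1 - 2^{-n}} (g n)^{2^{-n}}`, whose last factor tends to `1` because `g`
is bounded. With gaps `τ n - τ (n+1)` proportional to `q^n`, where `q^k = 3/4`, the series
`Σ a j / 2^j` is geometric with ratio `2/3`, and its sum is `N / T^k`.
-/

theorem le_exp_sum_mul_rpow_of_le_exp_mul_sqrt_succ {g a : ℕ → ℝ} {K : ℝ} (hK : 0 < K)
    (hg : ∀ n, 0 ≤ g n) (hstep : ∀ n, g n ≤ exp (a n) * √(K * g (n + 1))) (n : ℕ) :
    g 0 ≤ exp (∑ j ∈ Finset.range n, a j / 2 ^ j) * K ^ (1 - ((2 : ℝ) ^ n)⁻¹) *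
      g n ^ ((2 : ℝ) ^ n)⁻¹ := by
  induction n with
  | zero => simp
  | succ n ih =>
    set w : ℝ := ((2 : ℝ) ^ n)⁻¹
    have hw_succ : ((2 : ℝ) ^ (n + 1))⁻¹ = w / 2 := by rw [pow_succ, mul_inv]; ring
    have hroot : g n ^ w ≤ exp (a n * w) * (K ^ (w / 2) * g (n + 1) ^ (w / 2)) :=
      calc g n ^ w ≤ (exp (a n) * √(K * g (n + 1))) ^ w :=
            rpow_le_rpow (hg n) (hstep n) (by positivity)
        _ = exp (a n * w) * (K ^ (w / 2) * g (n + 1) ^ (w / 2)) := by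
            rw [mul_rpow (exp_pos _).le (sqrt_nonneg _), ← exp_mul, sqrt_eq_rpow,
              ← rpow_mul (mul_nonneg hK.le (hg _)), mul_rpow hK.le (hg _)]
            ring_nf
    calc g 0 ≤ exp (∑ j ∈ Finset.range n, a j / 2 ^ j) * K ^ (1 - w) * g n ^ w := ih
      _ ≤ exp (∑ j ∈ Finset.range n, a j / 2 ^ j) * K ^ (1 - w) *
            (exp (a n * w) * (K ^ (w / 2) * g (n + 1) ^ (w / 2))) := by gcongr
      _ = _ := by
        rw [Finset.sum_range_succ, exp_add, hw_succ, div_eq_mul_inv (a n),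
          show 1 - w / 2 = (1 - w) + w / 2 by ring, rpow_add hK]
        ring

theorem le_exp_mul_of_le_exp_mul_sqrt_succ {g a : ℕ → ℝ} {K E : ℝ} (hK : 0 ≤ K)
    (hg : ∀ n, 0 ≤ g n) (hbdd : BddAbove (range g))
    (hE : ∀ n, ∑ j ∈ Finset.range n, a j / 2 ^ j ≤ E)
    (hstep : ∀ n, g n ≤ exp (a n) * √(K * g (n + 1))) :
    g 0 ≤ exp E * K := by
  rcases hK.eq_or_lt with rfl | hK
  · simpa using hstep 0
  obtain ⟨G, hG⟩ := hbdd
  have hG' : ∀ n, g n ≤ max G 1 := fun n => (hG (mem_range_self n)).trans (le_max_left _ _)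
  have hbound : ∀ n : ℕ,
      g 0 ≤ exp E * (K ^ (1 - ((2 : ℝ) ^ n)⁻¹) * max G 1 ^ ((2 : ℝ) ^ n)⁻¹) := by
    intro n
    refine (le_exp_sum_mul_rpow_of_le_exp_mul_sqrt_succ hK hg hstep n).trans ?_
    rw [← mul_assoc]
    gcongr
    exacts [rpow_nonneg (hg n) _, hE n, hg n, hG' n]
  have hw : Tendsto (fun n : ℕ => ((2 : ℝ) ^ n)⁻¹) atTop (𝓝 0) :=
    tendsto_inv_atTop_zero.comp (tendsto_pow_atTop_atTop_of_one_lt one_lt_two)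
  have hcont : Continuous (fun x : ℝ => K ^ (1 - x) * max G 1 ^ x) := by
    fun_prop (disch := positivity)
  have hlim := ((hcont.tendsto 0).comp hw).const_mul (exp E)
  simp only [sub_zero, rpow_one, rpow_zero, mul_one] at hlim
  exact ge_of_tendsto' hlim hbound

theorem exists_sum_div_rpow_geometric_le {d k : ℝ} (hd : 0 < d) (hk : 0 < k) :
    ∃ q ∈ Ioo (0 : ℝ) 1, ∃ N > 0, ∀ T > 0, ∀ n : ℕ,
      ∑ j ∈ Finset.range n, d / (T / 2 * (1 - q) * q ^ j) ^ k / 2 ^ j ≤ N / T ^ k := by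
  set q : ℝ := (3 / 4) ^ k⁻¹
  have hq0 : 0 < q := by positivity
  have hq1 : q < 1 := rpow_lt_one (by norm_num) (by norm_num) (inv_pos.2 hk)
  have hqk : q ^ k = 3 / 4 := rpow_inv_rpow (by norm_num) hk.ne'
  have hc : 0 < (1 - q) / 2 := by linarith
  refine ⟨q, ⟨hq0, hq1⟩, 3 * d / ((1 - q) / 2) ^ k, by positivity, fun T hT n => ?_⟩
  have hterm : ∀ j : ℕ, d / (T / 2 * (1 - q) * q ^ j) ^ k / 2 ^ j
      = d / (T ^ k * ((1 - q) / 2) ^ k) * (2 / 3) ^ j := fun j => by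
    rw [show T / 2 * (1 - q) * q ^ j = T * ((1 - q) / 2) * q ^ j by ring,
      mul_rpow (by positivity) (by positivity), mul_rpow hT.le hc.le, ← rpow_pow_comm hq0.le,
      hqk]
    field_simp
    rw [← mul_pow, ← mul_pow]
    norm_num
  calc ∑ j ∈ Finset.range n, d / (T / 2 * (1 - q) * q ^ j) ^ k / 2 ^ j
      = d / (T ^ k * ((1 - q) / 2) ^ k) * ∑ j ∈ Finset.range n, (2 / 3 : ℝ) ^ j := by
        rw [Finset.mul_sum]
        exact Finset.sum_congr rfl fun j _ => hterm j
    _ ≤ d / (T ^ k * ((1 - q) / 2) ^ k) * 3 := by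
        have hgeom := geom_sum_Ico_le_of_lt_one (x := (2 / 3 : ℝ)) (m := 0) (n := n)
          (by norm_num) (by norm_num)
        rw [← Finset.range_eq_Ico] at hgeom
        norm_num at hgeom
        gcongr
    _ = 3 * d / ((1 - q) / 2) ^ k / T ^ k := by ring

theorem intervalIntegral.integral_sq_le_mul_integral {f : ℝ → ℝ} {a b C : ℝ} (hab : a ≤ b)
    (hf : ContinuousOn f (Icc a b)) (hf0 : ∀ t ∈ Icc a b, 0 ≤ f t)
    (hfC : ∀ t ∈ Icc a b, f t ≤ C) :
    ∫ t in a..b, f t ^ 2 ≤ C * ∫ t in a..b, f t := by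
  rw [← intervalIntegral.integral_const_mul]
  refine intervalIntegral.integral_mono_on hab ((hf.pow 2).intervalIntegrable_of_Icc hab)
    ((hf.const_smul C).intervalIntegrable_of_Icc hab) fun t ht => ?_
  rw [sq]
  exact mul_le_mul_of_nonneg_right (hfC t ht) (hf0 t ht)

section Semigroup

variable {X U : Type*} [NormedAddCommGroup X] [NormedSpace ℝ X]
  [NormedAddCommGroup U] [NormedSpace ℝ U] {S : ℝ → X →L[ℝ] X}

theorem apply_eq_apply_sub_apply
    (hSsemi : ∀ t s : ℝ, 0 ≤ t → 0 ≤ s → S (t + s) = (S t).comp (S s))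
    {s r : ℝ} (hs : 0 ≤ s) (hsr : s ≤ r) (u : X) : S r u = S (r - s) (S s u) := by
  rw [← ContinuousLinearMap.comp_apply, ← hSsemi _ _ (sub_nonneg.2 hsr) hs, sub_add_cancel]

theorem norm_apply_le_of_le {M α : ℝ} (hM : 0 ≤ M) (hα : 0 ≤ α)
    (hSbound : ∀ t : ℝ, 0 ≤ t → ∀ x : X, ‖S t x‖ ≤ M * exp (α * t) * ‖x‖)
    {t T : ℝ} (ht : 0 ≤ t) (htT : t ≤ T) (x : X) :
    ‖S t x‖ ≤ M * exp (α * T) * ‖x‖ := by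
  refine (hSbound t ht x).trans ?_
  gcongr

theorem integral_norm_sq_apply_le
    (hSsemi : ∀ t s : ℝ, 0 ≤ t → 0 ≤ s → S (t + s) = (S t).comp (S s))
    (hScont : ∀ x : X, ContinuousOn (fun t => S t x) (Ici 0))
    {M α : ℝ} (hM : 0 ≤ M) (hα : 0 ≤ α)
    (hSbound : ∀ t : ℝ, 0 ≤ t → ∀ x : X, ‖S t x‖ ≤ M * exp (α * t) * ‖x‖)
    (B : X →L[ℝ] U) {s r T : ℝ} (hs : 0 ≤ s) (hsr : s ≤ r) (hrT : r ≤ T) (u : X) :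
    ∫ t in s..r, ‖B (S t u)‖ ^ 2 ≤
      ‖B‖ * M * exp (α * T) * ‖S s u‖ * ∫ t in (0:ℝ)..T, ‖B (S t u)‖ := by
  have hcont : ContinuousOn (fun t => ‖B (S t u)‖) (Ici 0) :=
    (B.continuous.comp_continuousOn (hScont u)).norm
  have hbound : ∀ t ∈ Icc s r, ‖B (S t u)‖ ≤ ‖B‖ * M * exp (α * T) * ‖S s u‖ := by
    intro t ht
    calc ‖B (S t u)‖ ≤ ‖B‖ * ‖S (t - s) (S s u)‖ := by
          rw [← apply_eq_apply_sub_apply hSsemi hs ht.1]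
          exact B.le_opNorm _
      _ ≤ ‖B‖ * (M * exp (α * T) * ‖S s u‖) := by
          gcongr
          exact norm_apply_le_of_le hM hα hSbound (sub_nonneg.2 ht.1) (by linarith [ht.2]) _
      _ = ‖B‖ * M * exp (α * T) * ‖S s u‖ := by ring
  calc ∫ t in s..r, ‖B (S t u)‖ ^ 2
      ≤ ‖B‖ * M * exp (α * T) * ‖S s u‖ * ∫ t in s..r, ‖B (S t u)‖ :=
        intervalIntegral.integral_sq_le_mul_integral hsr
          (hcont.mono fun t ht => hs.trans ht.1) (fun _ _ => norm_nonneg _) hbound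
    _ ≤ ‖B‖ * M * exp (α * T) * ‖S s u‖ * ∫ t in (0:ℝ)..T, ‖B (S t u)‖ := by
        gcongr
        exact intervalIntegral.integral_mono_interval hs hsr hrT
          (Eventually.of_forall fun _ => norm_nonneg _)
          ((hcont.mono Icc_subset_Ici_self).intervalIntegrable_of_Icc
            (hs.trans (hsr.trans hrT)))

theorem integral_norm_sq_apply_apply_eq
    (hSsemi : ∀ t s : ℝ, 0 ≤ t → 0 ≤ s → S (t + s) = (S t).comp (S s))
    (B : X →L[ℝ] U) {s r : ℝ} (hs : 0 ≤ s) (hsr : s ≤ r) (u : X) :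
    ∫ t in (0:ℝ)..r - s, ‖B (S t (S s u))‖ ^ 2 = ∫ t in s..r, ‖B (S t u)‖ ^ 2 := by
  have hshift : EqOn (fun t => ‖B (S t (S s u))‖ ^ 2) (fun t => ‖B (S (t + s) u)‖ ^ 2)
      (uIcc 0 (r - s)) := fun t ht => by
    rw [uIcc_of_le (sub_nonneg.2 hsr)] at ht
    simp only [hSsemi t s ht.1 hs, ContinuousLinearMap.comp_apply]
  rw [intervalIntegral.integral_congr hshift,
    intervalIntegral.integral_comp_add_right (fun t => ‖B (S t u)‖ ^ 2), zero_add,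
    sub_add_cancel]

theorem norm_apply_le_exp_mul_sqrt
    (hSsemi : ∀ t s : ℝ, 0 ≤ t → 0 ≤ s → S (t + s) = (S t).comp (S s))
    (hScont : ∀ x : X, ContinuousOn (fun t => S t x) (Ici 0))
    {M α : ℝ} (hM : 0 ≤ M) (hα : 0 ≤ α)
    (hSbound : ∀ t : ℝ, 0 ≤ t → ∀ x : X, ‖S t x‖ ≤ M * exp (α * t) * ‖x‖)
    (B : X →L[ℝ] U) {d k : ℝ} {θ : ℝ → ℝ} (hθ : ∀ s : ℝ, 0 ≤ s → 0 ≤ θ s)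
    (hθmono : ∀ s t : ℝ, 0 ≤ s → s ≤ t → θ s ≤ θ t)
    (hobs : ∀ L : ℝ, 0 < L → ∀ u₀ : X,
      ‖S L u₀‖ ≤ θ L * exp (d / L ^ k) * √(∫ t in (0:ℝ)..L, ‖B (S t u₀)‖ ^ 2))
    {s r T : ℝ} (hs : 0 ≤ s) (hsr : s < r) (hrT : r ≤ T) (u : X) :
    ‖S r u‖ ≤ exp (d / (r - s) ^ k) * √(θ T ^ 2 * (‖B‖ * M * exp (α * T)) *
      (∫ t in (0:ℝ)..T, ‖B (S t u)‖) * ‖S s u‖) := by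
  have hL : 0 < r - s := sub_pos.2 hsr
  have hθT : 0 ≤ θ T := hθ T (hs.trans (hsr.le.trans hrT))
  calc ‖S r u‖ = ‖S (r - s) (S s u)‖ := by
        rw [← apply_eq_apply_sub_apply hSsemi hs hsr.le]
    _ ≤ θ (r - s) * exp (d / (r - s) ^ k) * √(∫ t in s..r, ‖B (S t u)‖ ^ 2) := by
        rw [← integral_norm_sq_apply_apply_eq hSsemi B hs hsr.le]
        exact hobs _ hL _
    _ ≤ θ T * exp (d / (r - s) ^ k) *
          √(‖B‖ * M * exp (α * T) * ‖S s u‖ * ∫ t in (0:ℝ)..T, ‖B (S t u)‖) := by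
        gcongr ?_ * _ * √?_
        · exact hθmono _ _ hL.le (by linarith)
        · exact integral_norm_sq_apply_le hSsemi hScont hM hα hSbound B hs hsr.le hrT u
    _ = _ := by
        rw [show θ T ^ 2 * (‖B‖ * M * exp (α * T)) * (∫ t in (0:ℝ)..T, ‖B (S t u)‖) * ‖S s u‖ =
            θ T ^ 2 * (‖B‖ * M * exp (α * T) * ‖S s u‖ * ∫ t in (0:ℝ)..T, ‖B (S t u)‖) by ring,
          sqrt_mul (sq_nonneg _), sqrt_sq hθT]
        ring

end Semigroup

theorem telescoping_L2_to_L1_observability_general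
    {X U : Type*}
    [NormedAddCommGroup X] [InnerProductSpace ℝ X]
    [NormedAddCommGroup U] [InnerProductSpace ℝ U]
    (S : ℝ → X →L[ℝ] X)
    (hSsemi : ∀ t s : ℝ, 0 ≤ t → 0 ≤ s → S (t + s) = (S t).comp (S s))
    (hScont : ∀ x : X, ContinuousOn (fun t => S t x) (Set.Ici 0))
    (M α : ℝ) (hM : 0 < M) (hα : 0 ≤ α)
    (hSbound : ∀ t : ℝ, 0 ≤ t → ∀ x : X, ‖S t x‖ ≤ M * Real.exp (α * t) * ‖x‖)
    (B : X →L[ℝ] U)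
    (d k : ℝ) (hd : 0 < d) (hk : 0 < k)
    (θ : ℝ → ℝ) (hθ : ∀ s : ℝ, 0 ≤ s → 0 ≤ θ s)
    (hθmono : ∀ s t : ℝ, 0 ≤ s → s ≤ t → θ s ≤ θ t)
    (hobs : ∀ L : ℝ, 0 < L → ∀ u₀ : X,
      ‖S L u₀‖ ≤ θ L * Real.exp (d / L ^ k) *
        Real.sqrt (∫ t in (0:ℝ)..L, ‖B (S t u₀)‖ ^ 2)) :
    ∃ N > (0:ℝ), ∀ T : ℝ, 0 < T → ∀ u₀ : X,
      ‖S T u₀‖ ≤ (θ T ^ 2 * ‖B‖ * M * Real.exp (α * T)) * Real.exp (N / T ^ k) *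
        ∫ t in (0:ℝ)..T, ‖B (S t u₀)‖ := by
  obtain ⟨q, ⟨hq0, hq1⟩, N, hN, hsum⟩ := exists_sum_div_rpow_geometric_le hd hk
  refine ⟨N, hN, fun T hT u₀ => ?_⟩
  set τ : ℕ → ℝ := fun n => T / 2 * (1 + q ^ n)
  have hτ_nonneg : ∀ n, 0 ≤ τ n := fun n => by positivity
  have hτ_le : ∀ n, τ n ≤ T := fun n => by
    have := pow_le_one₀ hq0.le hq1.le (n := n)
    simp only [τ]
    nlinarith
  have hτ_gap : ∀ n, τ n - τ (n + 1) = T / 2 * (1 - q) * q ^ n := fun n => by ring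
  have hτ_lt : ∀ n, τ (n + 1) < τ n := fun n => by
    have := mul_pos (mul_pos (half_pos hT) (sub_pos.2 hq1)) (pow_pos hq0 n)
    linarith [hτ_gap n]
  have hJ : 0 ≤ ∫ t in (0:ℝ)..T, ‖B (S t u₀)‖ :=
    intervalIntegral.integral_nonneg hT.le fun _ _ => norm_nonneg _
  have key := le_exp_mul_of_le_exp_mul_sqrt_succ (g := fun n => ‖S (τ n) u₀‖)
    (a := fun n => d / (T / 2 * (1 - q) * q ^ n) ^ k)
    (K := θ T ^ 2 * (‖B‖ * M * exp (α * T)) * ∫ t in (0:ℝ)..T, ‖B (S t u₀)‖)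
    (by positivity) (fun _ => norm_nonneg _)
    ⟨M * exp (α * T) * ‖u₀‖, forall_mem_range.2 fun n =>
      norm_apply_le_of_le hM.le hα hSbound (hτ_nonneg n) (hτ_le n) u₀⟩
    (hsum T hT) fun n => by
      simpa only [hτ_gap] using norm_apply_le_exp_mul_sqrt hSsemi hScont hM.le hα hSbound B hθ
        hθmono hobs (hτ_nonneg (n + 1)) (hτ_lt n) (hτ_le n) u₀
  have hτ0 : τ 0 = T := by simp only [τ, pow_zero]; ring
  rw [hτ0] at key
  linarith

/-- **Telescoping series method: from `L²`- to `L¹`-observability on time intervals.**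
If `‖S L u₀‖ ≤ θ(L) e^{d/L^k} (∫_0^L ‖B (S t u₀)‖² dt)^{1/2}` for all `L > 0`, then there
is `N = N(d,k) > 0` such that
`‖S T u₀‖ ≤ θ(T)² ‖B‖ M e^{αT} e^{N/T^k} ∫_0^T ‖B (S t u₀)‖ dt` for all `T > 0`. -/
theorem telescoping_L2_to_L1_observability
    {X U : Type*}
    [NormedAddCommGroup X] [InnerProductSpace ℝ X] [CompleteSpace X]
    [NormedAddCommGroup U] [InnerProductSpace ℝ U] [CompleteSpace U]
    (S : ℝ → X →L[ℝ] X)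
    (hS0 : S 0 = ContinuousLinearMap.id ℝ X)
    (hSsemi : ∀ t s : ℝ, 0 ≤ t → 0 ≤ s → S (t + s) = (S t).comp (S s))
    (hScont : ∀ x : X, ContinuousOn (fun t => S t x) (Set.Ici 0))
    (M α : ℝ) (hM : 0 < M) (hα : 0 ≤ α)
    (hSbound : ∀ t : ℝ, 0 ≤ t → ∀ x : X, ‖S t x‖ ≤ M * Real.exp (α * t) * ‖x‖)
    (B : X →L[ℝ] U)
    (d k : ℝ) (hd : 0 < d) (hk : 0 < k)
    (θ : ℝ → ℝ) (hθ : ∀ s : ℝ, 0 ≤ s → 0 ≤ θ s)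
    (hθmono : ∀ s t : ℝ, 0 ≤ s → s ≤ t → θ s ≤ θ t)
    (hobs : ∀ L : ℝ, 0 < L → ∀ u₀ : X,
      ‖S L u₀‖ ≤ θ L * Real.exp (d / L ^ k) *
        Real.sqrt (∫ t in (0:ℝ)..L, ‖B (S t u₀)‖ ^ 2)) :
    ∃ N > (0:ℝ), ∀ T : ℝ, 0 < T → ∀ u₀ : X,
      ‖S T u₀‖ ≤ (θ T ^ 2 * ‖B‖ * M * Real.exp (α * T)) * Real.exp (N / T ^ k) *
        ∫ t in (0:ℝ)..T, ‖B (S t u₀)‖ :=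
  telescoping_L2_to_L1_observability_general S hSsemi hScont M α hM hα hSbound B d k hd hk θ hθ
    hθmono hobs
end

section
/- There exists a constant K ≥ 1, depending only on N, μ, γ and ‖B‖, such that for every m ∈ ℕ, every t > 0 and every u₀ ∈ X: ‖S(t) u₀‖_X ≤ K exp( K t^{-γ/(1-γ)} ) ( e^{μ λ_m t / 2} ‖B S(t) u₀‖_U + e^{-μ λ_m t / 2} ‖u₀‖_X ). -/
/-!
Split `u₀ = f₀ + g₀` with `f₀ ∈ E_m` and `g₀ ⊥ E_m`. By invariance `S t f₀ ∈ E_m`, so the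
spectral inequality controls it through `B (S t f₀) = B (S t u₀) - B (S t g₀)`, while
`‖S t g₀‖ ≤ e^{-μ λ_m t} ‖u₀‖`. Hence
`‖S t u₀‖ ≲ e^{N λ_m^γ} ‖B (S t u₀)‖ + e^{N λ_m^γ - μ λ_m t} ‖u₀‖`, and Young's inequality
`N λ^γ ≤ μ λ t / 2 + C t^{-γ/(1-γ)}` pays the cost `e^{N λ_m^γ}` of the spectral inequality
with half of the dissipation.
-/

open Real

theorem norm_apply_le_of_invariant_of_orthogonal_decay
    {𝕜 X U : Type*} [RCLike 𝕜] [NormedAddCommGroup X] [InnerProductSpace 𝕜 X]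
    [SeminormedAddCommGroup U] [NormedSpace 𝕜 U]
    (E : Submodule 𝕜 X) [E.HasOrthogonalProjection] (T : X →L[𝕜] X) (B : X →L[𝕜] U)
    {c δ : ℝ} (hc : 0 ≤ c) (hδ : 0 ≤ δ)
    (hinv : ∀ f ∈ E, T f ∈ E) (hdecay : ∀ g ∈ Eᗮ, ‖T g‖ ≤ δ * ‖g‖)
    (hobs : ∀ f ∈ E, ‖f‖ ≤ c * ‖B f‖) (u : X) :
    ‖T u‖ ≤ c * ‖B (T u)‖ + (c * ‖B‖ + 1) * (δ * ‖u‖) := by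
  set f := E.starProjection u
  set g := Eᗮ.starProjection u
  have hsplit : T u = T f + T g := by
    rw [← map_add, E.starProjection_add_starProjection_orthogonal]
  have hg : ‖T g‖ ≤ δ * ‖u‖ :=
    (hdecay g (Eᗮ.starProjection_apply_mem u)).trans
      (by gcongr; exact Eᗮ.norm_starProjection_apply_le u)
  have hBf : ‖B (T f)‖ ≤ ‖B (T u)‖ + ‖B‖ * ‖T g‖ :=
    calc ‖B (T f)‖ = ‖B (T u) - B (T g)‖ := by rw [hsplit, map_add, add_sub_cancel_right]
      _ ≤ ‖B (T u)‖ + ‖B (T g)‖ := norm_sub_le _ _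
      _ ≤ ‖B (T u)‖ + ‖B‖ * ‖T g‖ := by gcongr; exact B.le_opNorm _
  calc ‖T u‖ ≤ ‖T f‖ + ‖T g‖ := hsplit ▸ norm_add_le _ _
    _ ≤ c * (‖B (T u)‖ + ‖B‖ * ‖T g‖) + ‖T g‖ := by
      gcongr; exact (hobs _ (hinv f (E.starProjection_apply_mem u))).trans (by gcongr)
    _ = c * ‖B (T u)‖ + (c * ‖B‖ + 1) * ‖T g‖ := by ring
    _ ≤ c * ‖B (T u)‖ + (c * ‖B‖ + 1) * (δ * ‖u‖) := by gcongr

theorem rpow_mul_le_add_rpow_inv_one_sub {γ x y : ℝ} (hγ0 : 0 ≤ γ) (hγ1 : γ < 1)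
    (hx : 0 ≤ x) (hy : 0 ≤ y) :
    x ^ γ * y ≤ x + y ^ (1 - γ)⁻¹ := by
  have h := geom_mean_le_arith_mean2_weighted hγ0 (sub_nonneg.2 hγ1.le) hx
    (rpow_nonneg hy (1 - γ)⁻¹) (add_sub_cancel γ 1)
  rw [← rpow_mul hy, inv_mul_cancel₀ (sub_pos.2 hγ1).ne', rpow_one] at h
  nlinarith [rpow_nonneg hy (1 - γ)⁻¹]

theorem exists_mul_rpow_le_mul_add_rpow_neg {γ μ N : ℝ} (hγ0 : 0 ≤ γ) (hγ1 : γ < 1)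
    (hμ : 0 < μ) (hN : 0 ≤ N) :
    ∃ C ≥ 0, ∀ Λ ≥ 0, ∀ t > 0, N * Λ ^ γ ≤ μ * Λ * t / 2 + C * t ^ (-(γ / (1 - γ))) := by
  refine ⟨N ^ (1 - γ)⁻¹ * (μ / 2) ^ (-(γ / (1 - γ))), by positivity, fun Λ hΛ t ht => ?_⟩
  have hs : 0 < μ * t / 2 := by positivity
  have hexp : -γ * (1 - γ)⁻¹ = -(γ / (1 - γ)) := by ring
  -- with `s = μ t / 2`, write `N Λ^γ = (s Λ)^γ (N s^{-γ})` and apply Young's inequality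
  have h := rpow_mul_le_add_rpow_inv_one_sub hγ0 hγ1 (mul_nonneg hs.le hΛ)
    (mul_nonneg hN (rpow_nonneg hs.le (-γ)))
  rw [mul_rpow hs.le hΛ, mul_rpow hN (rpow_nonneg hs.le _), ← rpow_mul hs.le, hexp,
    show μ * t / 2 = μ / 2 * t by ring, mul_rpow (by positivity) ht.le,
    mul_rpow (by positivity) ht.le, mul_rpow (by positivity) ht.le] at h
  calc N * Λ ^ γ = ((μ / 2) ^ γ * (μ / 2) ^ (-γ)) * (t ^ γ * t ^ (-γ)) * Λ ^ γ * N := by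
        rw [← rpow_add (by positivity), ← rpow_add ht, add_neg_cancel, rpow_zero, rpow_zero]
        ring
    _ ≤ μ / 2 * t * Λ + N ^ (1 - γ)⁻¹ * ((μ / 2) ^ (-(γ / (1 - γ))) * t ^ (-(γ / (1 - γ)))) :=
        by linarith
    _ = _ := by ring

theorem mul_exp_add_le_mul_exp_mul_add {N β C τ P ℓ a b : ℝ} (hN : 0 ≤ N) (hβ : 0 ≤ β)
    (hC : 0 ≤ C) (hτ : 0 ≤ τ) (hℓ : 0 ≤ ℓ) (ha : 0 ≤ a) (hb : 0 ≤ b) (hP : P ≤ ℓ + C * τ) :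
    N * exp P * a + (N * exp P * β + 1) * (exp (-(2 * ℓ)) * b) ≤
      (N * β + N + 1 + C) * exp ((N * β + N + 1 + C) * τ) * (exp ℓ * a + exp (-ℓ) * b) := by
  set K := N * β + N + 1 + C
  set A := exp (C * τ)
  have hc : exp P ≤ A * exp ℓ := by
    rw [← exp_add]; exact exp_le_exp.2 (by linarith)
  have hcδ : exp P * exp (-(2 * ℓ)) ≤ A * exp (-ℓ) := by
    rw [← exp_add, ← exp_add]; exact exp_le_exp.2 (by linarith)
  have hδ : exp (-(2 * ℓ)) ≤ A * exp (-ℓ) := by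
    rw [← exp_add]; exact exp_le_exp.2 (by nlinarith)
  have hAK : A ≤ exp (K * τ) :=
    exp_le_exp.2 (mul_le_mul_of_nonneg_right (by nlinarith) hτ)
  calc N * exp P * a + (N * exp P * β + 1) * (exp (-(2 * ℓ)) * b)
      = N * exp P * a + (N * β * (exp P * exp (-(2 * ℓ))) + exp (-(2 * ℓ))) * b := by ring
    _ ≤ N * (A * exp ℓ) * a + (N * β * (A * exp (-ℓ)) + A * exp (-ℓ)) * b := by gcongr
    _ = A * (N * (exp ℓ * a) + (N * β + 1) * (exp (-ℓ) * b)) := by ring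
    _ ≤ A * (K * (exp ℓ * a) + K * (exp (-ℓ) * b)) := by gcongr <;> nlinarith
    _ = K * A * (exp ℓ * a + exp (-ℓ) * b) := by ring
    _ ≤ K * exp (K * τ) * (exp ℓ * a + exp (-ℓ) * b) := by gcongr

theorem one_time_estimate_spectral_parameter_general
    {X U : Type*}
    [NormedAddCommGroup X] [InnerProductSpace ℝ X] [CompleteSpace X]
    [NormedAddCommGroup U] [InnerProductSpace ℝ U]
    (S : ℝ → X →L[ℝ] X)
    (B : X →L[ℝ] U)
    -- Hypothesis (H)
    (Em : ℕ → Submodule ℝ X) (hclosed : ∀ m, IsClosed (Em m : Set X))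
    (Λ : ℕ → ℝ) (hΛ0 : 0 < Λ 0) (hΛmono : Monotone Λ)
    (μ γ N : ℝ) (hμ : 0 < μ) (hγ : γ ∈ Set.Ioo (0:ℝ) 1) (hN : 1 ≤ N)
    (hinv : ∀ (m : ℕ) (t : ℝ), 0 ≤ t → ∀ x ∈ Em m, S t x ∈ Em m)
    (hdecay : ∀ (m : ℕ) (t : ℝ), 0 < t → ∀ g ∈ (Em m)ᗮ,
      ‖S t g‖ ≤ Real.exp (-(μ * t * Λ m)) * ‖g‖)
    (hspec : ∀ m : ℕ, ∀ f ∈ Em m, ‖f‖ ≤ N * Real.exp (N * Λ m ^ γ) * ‖B f‖) :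
    ∃ K ≥ (1:ℝ), ∀ (m : ℕ) (t : ℝ), 0 < t → ∀ u₀ : X,
      ‖S t u₀‖ ≤ K * Real.exp (K * t ^ (-(γ / (1 - γ)))) *
        (Real.exp (μ * Λ m * t / 2) * ‖B (S t u₀)‖ +
          Real.exp (-(μ * Λ m * t / 2)) * ‖u₀‖) := by
  obtain ⟨C, hC, hyoung⟩ := exists_mul_rpow_le_mul_add_rpow_neg hγ.1.le hγ.2 hμ (by linarith)
  refine ⟨N * ‖B‖ + N + 1 + C, by nlinarith [norm_nonneg B], fun m t ht u₀ => ?_⟩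
  have : CompleteSpace (Em m) := (hclosed m).completeSpace_coe
  have hΛ : 0 ≤ Λ m := hΛ0.le.trans (hΛmono m.zero_le)
  have hobs := norm_apply_le_of_invariant_of_orthogonal_decay (Em m) (S t) B (by positivity)
    (exp_pos _).le (hinv m t ht.le) (hdecay m t ht) (hspec m) u₀
  rw [show μ * t * Λ m = 2 * (μ * Λ m * t / 2) by ring] at hobs
  exact hobs.trans (mul_exp_add_le_mul_exp_mul_add (by linarith) (norm_nonneg B) hC
    (by positivity) (by positivity) (norm_nonneg _) (norm_nonneg _) (hyoung (Λ m) hΛ t ht))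

/-- **Quantitative estimate at one time with spectral parameter.**
There is `K ≥ 1`, depending only on `N, μ, γ, ‖B‖`, such that for every `m`, `t > 0` and
`u₀ ∈ X`,
`‖S t u₀‖ ≤ K e^{K t^{-γ/(1-γ)}} (e^{μ λ_m t/2} ‖B (S t u₀)‖ + e^{-μ λ_m t/2} ‖u₀‖)`. -/
theorem one_time_estimate_spectral_parameter
    {X U : Type*}
    [NormedAddCommGroup X] [InnerProductSpace ℝ X] [CompleteSpace X]
    [NormedAddCommGroup U] [InnerProductSpace ℝ U] [CompleteSpace U]
    (S : ℝ → X →L[ℝ] X)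
    (hS0 : S 0 = ContinuousLinearMap.id ℝ X)
    (hSsemi : ∀ t s : ℝ, 0 ≤ t → 0 ≤ s → S (t + s) = (S t).comp (S s))
    (hScont : ∀ x : X, ContinuousOn (fun t => S t x) (Set.Ici 0))
    (M α : ℝ) (hM : 1 ≤ M) (hα : 0 ≤ α)
    (hSbound : ∀ t : ℝ, 0 ≤ t → ∀ x : X, ‖S t x‖ ≤ M * Real.exp (α * t) * ‖x‖)
    (B : X →L[ℝ] U)
    -- Hypothesis (H)
    (Em : ℕ → Submodule ℝ X) (hclosed : ∀ m, IsClosed (Em m : Set X))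
    (hmonoE : Monotone Em)
    (Λ : ℕ → ℝ) (hΛ0 : 0 < Λ 0) (hΛmono : Monotone Λ)
    (hΛtop : Filter.Tendsto Λ Filter.atTop Filter.atTop)
    (μ γ N : ℝ) (hμ : 0 < μ) (hγ : γ ∈ Set.Ioo (0:ℝ) 1) (hN : 1 ≤ N)
    (hinv : ∀ (m : ℕ) (t : ℝ), 0 ≤ t → ∀ x ∈ Em m, S t x ∈ Em m)
    (hdecay : ∀ (m : ℕ) (t : ℝ), 0 < t → ∀ g ∈ (Em m)ᗮ,
      ‖S t g‖ ≤ Real.exp (-(μ * t * Λ m)) * ‖g‖)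
    (hspec : ∀ m : ℕ, ∀ f ∈ Em m, ‖f‖ ≤ N * Real.exp (N * Λ m ^ γ) * ‖B f‖) :
    ∃ K ≥ (1:ℝ), ∀ (m : ℕ) (t : ℝ), 0 < t → ∀ u₀ : X,
      ‖S t u₀‖ ≤ K * Real.exp (K * t ^ (-(γ / (1 - γ)))) *
        (Real.exp (μ * Λ m * t / 2) * ‖B (S t u₀)‖ +
          Real.exp (-(μ * Λ m * t / 2)) * ‖u₀‖) :=
  one_time_estimate_spectral_parameter_general S B Em hclosed Λ hΛ0 hΛmono μ γ N hμ hγ hN hinv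
    hdecay hspec
end

section
/- Let T > 0, d > 0, k > 0, set q := ((2d+1)/(2d+2))^{1/k} ∈ (0,1) and ℓ_m := q^m T for m ≥ 0. Let h : [0,T] → [0,∞) be a bounded function and let (b_m)_{m ≥ 0} be nonnegative real numbers such that for every m ≥ 0: exp( -(2d+1)/(ℓ_m - ℓ_{m+1})^k ) h(ℓ_m) - exp( -(2d+2)/(ℓ_m - ℓ_{m+1})^k ) h(ℓ_{m+1}) ≤ b_m. Then h(T) ≤ exp( (2d+1) / ((1-q) T)^k ) · Σ_{m=0}^{∞} b_m, where the sum is taken in [0,∞]. -/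
/-! With `q^k = (2d+1)/(2d+2)` the gaps `ℓ_m - ℓ_{m+1} = q^m (1-q) T` are geometric, so the
weight `exp(-(2d+2)/(ℓ_m-ℓ_{m+1})^k)` equals `exp(-(2d+1)/(ℓ_{m+1}-ℓ_{m+2})^k)`. Hence
`a_m := exp(-(2d+1)/(ℓ_m-ℓ_{m+1})^k) h(ℓ_m)` satisfies `a_m - a_{m+1} ≤ b_m`, and summing gives
`a_0 ≤ a_N + ∑_{m<N} b_m`. Since `h` is bounded above and the exponent `(2d+1)/(ℓ_N-ℓ_{N+1})^k`
grows geometrically, `a_N` is bounded above by a sequence tending to `0`. -/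

open Filter Topology

theorem ENNReal.ofReal_le_tsum_of_sub_succ_le {a b u : ℕ → ℝ}
    (hab : ∀ m, a m - a (m + 1) ≤ b m) (hau : ∀ n, a n ≤ u n)
    (hu : Tendsto u atTop (𝓝 0)) :
    ENNReal.ofReal (a 0) ≤ ∑' m, ENNReal.ofReal (b m) := by
  have hpartial : ∀ n, ENNReal.ofReal (a 0) ≤
      ENNReal.ofReal (u n) + ∑' m, ENNReal.ofReal (b m) := fun n => calc
    ENNReal.ofReal (a 0) ≤ ENNReal.ofReal (u n + ∑ m ∈ Finset.range n, b m) := by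
      refine ENNReal.ofReal_le_ofReal ?_
      have := Finset.sum_le_sum fun m (_ : m ∈ Finset.range n) => hab m
      rw [Finset.sum_range_sub'] at this
      linarith [hau n]
    _ ≤ ENNReal.ofReal (u n) + ∑ m ∈ Finset.range n, ENNReal.ofReal (b m) :=
      ENNReal.ofReal_add_le.trans <| add_le_add_right
        (Finset.le_sum_of_subadditive _ ENNReal.ofReal_zero.le
          (fun _ _ => ENNReal.ofReal_add_le) _ _) _
    _ ≤ ENNReal.ofReal (u n) + ∑' m, ENNReal.ofReal (b m) :=
      add_le_add_right (ENNReal.sum_le_tsum _) _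
  have hlim : Tendsto (fun n => ENNReal.ofReal (u n) + ∑' m, ENNReal.ofReal (b m)) atTop
      (𝓝 (∑' m, ENNReal.ofReal (b m))) := by
    simpa using (ENNReal.tendsto_ofReal hu).add_const (∑' m, ENNReal.ofReal (b m))
  exact ge_of_tendsto' hlim hpartial

theorem tendsto_exp_neg_div_pow_mul_atTop_nhds_zero {c D r : ℝ} (hc : 0 < c) (hD : 0 < D)
    (hr₀ : 0 < r) (hr₁ : r < 1) :
    Tendsto (fun m : ℕ => Real.exp (-c / (r ^ m * D))) atTop (𝓝 0) := by
  have hexponent : Tendsto (fun m : ℕ => c / D * r⁻¹ ^ m) atTop atTop :=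
    (tendsto_pow_atTop_atTop_of_one_lt (one_lt_inv₀ hr₀ |>.mpr hr₁)).const_mul_atTop
      (div_pos hc hD)
  refine Real.tendsto_exp_neg_atTop_nhds_zero.comp hexponent |>.congr fun m => ?_
  simp only [Function.comp_apply, inv_pow, neg_div]
  field_simp

theorem add_one_div_pow_mul_eq_div_pow_succ_mul {c D r : ℝ} (hr : r * (c + 1) = c)
    (hr₀ : r ≠ 0) (m : ℕ) : (c + 1) / (r ^ m * D) = c / (r ^ (m + 1) * D) := by
  rw [pow_succ, mul_right_comm]
  conv_rhs => rw [← hr, mul_comm r]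
  exact (mul_div_mul_right _ _ hr₀).symm

theorem Real.pow_mul_rpow {q δ : ℝ} (hq : 0 ≤ q) (hδ : 0 ≤ δ) (k : ℝ) (m : ℕ) :
    (q ^ m * δ) ^ k = (q ^ k) ^ m * δ ^ k := by
  rw [Real.mul_rpow (pow_nonneg hq m) hδ, Real.rpow_pow_comm hq]

theorem ofReal_le_exp_mul_tsum_of_weighted_sub_le {c D r : ℝ} (hc : 0 < c) (hD : 0 < D)
    (hr : r = c / (c + 1)) {x b : ℕ → ℝ} (hx : ∃ M, ∀ m, x m ≤ M)
    (hxb : ∀ m, Real.exp (-c / (r ^ m * D)) * x m -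
      Real.exp (-(c + 1) / (r ^ m * D)) * x (m + 1) ≤ b m) :
    ENNReal.ofReal (x 0) ≤ ENNReal.ofReal (Real.exp (c / D)) * ∑' m, ENNReal.ofReal (b m) := by
  obtain ⟨M, hM⟩ := hx
  have hr₀ : 0 < r := hr ▸ by positivity
  have hr₁ : r < 1 := hr ▸ (div_lt_one (by linarith)).mpr (by linarith)
  have hr_mul : r * (c + 1) = c := by rw [hr]; field_simp
  set w : ℕ → ℝ := fun m => Real.exp (-c / (r ^ m * D))
  have hweighted : ENNReal.ofReal (w 0 * x 0) ≤ ∑' m, ENNReal.ofReal (b m) := by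
    refine ENNReal.ofReal_le_tsum_of_sub_succ_le (u := fun m => w m * M) (fun m => ?_)
      (fun m => mul_le_mul_of_nonneg_left (hM m) (Real.exp_pos _).le) ?_
    · simpa only [w, neg_div, add_one_div_pow_mul_eq_div_pow_succ_mul hr_mul hr₀.ne'] using hxb m
    · simpa using (tendsto_exp_neg_div_pow_mul_atTop_nhds_zero hc hD hr₀ hr₁).mul_const M
  have hx0 : x 0 = Real.exp (c / D) * (w 0 * x 0) := by
    simp only [w, pow_zero, one_mul, neg_div, ← mul_assoc, ← Real.exp_add, add_neg_cancel,
      Real.exp_zero]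
  rw [hx0, ENNReal.ofReal_mul (Real.exp_pos _).le]
  gcongr

theorem telescoping_series_summation_lemma_general
    (T d k : ℝ) (hT : 0 < T) (hd : 0 < d) (hk : 0 < k)
    (q : ℝ) (hq : q = ((2 * d + 1) / (2 * d + 2)) ^ (1 / k))
    (ℓ : ℕ → ℝ) (hℓ : ∀ m : ℕ, ℓ m = q ^ m * T)
    (h : ℝ → ℝ)
    (hbdd : ∃ Cb : ℝ, ∀ t ∈ Set.Icc (0:ℝ) T, h t ≤ Cb)
    (b : ℕ → ℝ)
    (hrec : ∀ m : ℕ,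
      Real.exp (-(2 * d + 1) / (ℓ m - ℓ (m + 1)) ^ k) * h (ℓ m) -
        Real.exp (-(2 * d + 2) / (ℓ m - ℓ (m + 1)) ^ k) * h (ℓ (m + 1)) ≤ b m) :
    ENNReal.ofReal (h T) ≤
      ENNReal.ofReal (Real.exp ((2 * d + 1) / ((1 - q) * T) ^ k)) *
        ∑' m : ℕ, ENNReal.ofReal (b m) := by
  have hratio₀ : 0 < (2 * d + 1) / (2 * d + 2) := by positivity
  have hratio₁ : (2 * d + 1) / (2 * d + 2) < 1 := (div_lt_one (by linarith)).mpr (by linarith)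
  have hq₀ : 0 < q := hq ▸ Real.rpow_pos_of_pos hratio₀ _
  have hq₁ : q < 1 := hq ▸ Real.rpow_lt_one hratio₀.le hratio₁ (by positivity)
  have hqk : q ^ k = (2 * d + 1) / (2 * d + 1 + 1) := by
    rw [hq, one_div, Real.rpow_inv_rpow hratio₀.le hk.ne']
    congr 1
    ring
  have hδ : 0 < (1 - q) * T := mul_pos (by linarith) hT
  have hgap (m : ℕ) : (ℓ m - ℓ (m + 1)) ^ k = (q ^ k) ^ m * ((1 - q) * T) ^ k := by
    rw [← Real.pow_mul_rpow hq₀.le hδ.le k m, hℓ, hℓ, pow_succ]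
    congr 1
    ring
  have hℓ_mem (m : ℕ) : ℓ m ∈ Set.Icc 0 T := by
    rw [hℓ]
    exact ⟨by positivity, mul_le_of_le_one_left hT.le (pow_le_one₀ hq₀.le hq₁.le)⟩
  obtain ⟨Cb, hCb⟩ := hbdd
  simpa only [hℓ, pow_zero, one_mul] using
    ofReal_le_exp_mul_tsum_of_weighted_sub_le (by linarith) (Real.rpow_pos_of_pos hδ k) hqk
      ⟨Cb, fun m => hCb _ (hℓ_mem m)⟩ fun m => by
        simpa only [hgap, show 2 * d + 2 = 2 * d + 1 + 1 by ring] using hrec m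

/-- **Telescoping-series summation lemma.**
With `q = ((2d+1)/(2d+2))^{1/k}` and `ℓ_m = q^m T`, if the weighted differences
`exp(-(2d+1)/(ℓ_m-ℓ_{m+1})^k) h(ℓ_m) - exp(-(2d+2)/(ℓ_m-ℓ_{m+1})^k) h(ℓ_{m+1})` are
bounded by `b_m`, then `h(T) ≤ exp((2d+1)/((1-q)T)^k) Σ_m b_m` (sum in `[0,∞]`). -/
theorem telescoping_series_summation_lemma
    (T d k : ℝ) (hT : 0 < T) (hd : 0 < d) (hk : 0 < k)
    (q : ℝ) (hq : q = ((2 * d + 1) / (2 * d + 2)) ^ (1 / k))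
    (ℓ : ℕ → ℝ) (hℓ : ∀ m : ℕ, ℓ m = q ^ m * T)
    (h : ℝ → ℝ)
    (hnonneg : ∀ t ∈ Set.Icc (0:ℝ) T, 0 ≤ h t)
    (hbdd : ∃ Cb : ℝ, ∀ t ∈ Set.Icc (0:ℝ) T, h t ≤ Cb)
    (b : ℕ → ℝ) (hb : ∀ m : ℕ, 0 ≤ b m)
    (hrec : ∀ m : ℕ,
      Real.exp (-(2 * d + 1) / (ℓ m - ℓ (m + 1)) ^ k) * h (ℓ m) -
        Real.exp (-(2 * d + 2) / (ℓ m - ℓ (m + 1)) ^ k) * h (ℓ (m + 1)) ≤ b m) :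
    ENNReal.ofReal (h T) ≤
      ENNReal.ofReal (Real.exp ((2 * d + 1) / ((1 - q) * T) ^ k)) *
        ∑' m : ℕ, ENNReal.ofReal (b m) :=
  telescoping_series_summation_lemma_general T d k hT hd hk q hq ℓ hℓ h hbdd b hrec
end
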